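/- arXiv:2403.01672 — 4 statements merged into one kernel-verified Lean document; each statement's English description precedes it below -/
import Mathlib

section
/- Let H be a real Hilbert space, A a closed linear subspace of H with orthogonal projection P_A, (g_k)_{k∈Z} a family of pairwise orthogonal nonzero vectors of H, and s = (s_k)_{k∈Z} real numbers such that A_s := A ∩ H_s is nonempty, where H_s := {v ∈ H : ⟨v, g_k⟩ = s_k for all k ∈ Z}. Let P_{H_s} be the orthogonal projection (nearest-point map) onto the nonempty closed affine set H_s. Let (λ_n)_{n≥0} be a sequence in [0,2] with Σ_{n≥0} λ_n(2 − λ_n) = +∞. Then for any u⁽⁰⁾ ∈ A, the relaxed POCS iteration u⁽ⁿ⁺¹⁾ := P_A( u⁽ⁿ⁾ + λ_n (P_{H_s} u⁽ⁿ⁾ − u⁽ⁿ⁾) ) converges in norm to the unique nearest point of A_s to u⁽⁰⁾. -/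
/-!
Translating by a point `a ∈ A ∩ H_s` turns `H_s` into the closed subspace `M = (span g)ᗮ` and the
iteration into `vₙ₊₁ = (1 - λₙ T) vₙ` with `T = S† S`, `S = P_{Mᗮ} P_A`. Such a `T` is self-adjoint
with `‖T x‖² ≤ ⟪T x, x⟫`, so `⟪T vₙ, vₙ⟫` decreases while `∑ λₙ (2 - λₙ) ⟪T vₙ, vₙ⟫ ≤ ‖v₀‖²`;
divergence of `∑ λₙ (2 - λₙ)` then forces `T vₙ → 0`. The iteration operators are contractions
commuting with `T`, so they drive `range T`, hence its closure `(ker T)ᗮ`, to `0` and fix `ker T`: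
the iterates converge to the projection of `v₀` onto `ker T`, which for `v₀ ∈ A` is its projection
onto `A ∩ M`.
-/

open RealInnerProductSpace Filter Topology
open scoped InnerProduct

theorem tendsto_zero_of_antitone_of_sum_mul_le {w t : ℕ → ℝ} {C : ℝ}
    (hw : ∀ n, 0 ≤ w n) (hw_sum : ¬ Summable w) (ht : Antitone t) (ht0 : ∀ n, 0 ≤ t n)
    (hsum : ∀ n, ∑ k ∈ Finset.range n, w k * t k ≤ C) : Tendsto t atTop (𝓝 0) := by
  have hlim := tendsto_atTop_ciInf ht ⟨0, Set.forall_mem_range.2 ht0⟩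
  set L := ⨅ n, t n
  obtain hL | hL := (le_ciInf ht0 : 0 ≤ L).eq_or_lt
  · rwa [hL]
  refine absurd (summable_of_sum_range_le hw (c := C / L) fun n => ?_) hw_sum
  rw [le_div_iff₀ hL, Finset.sum_mul]
  exact (Finset.sum_le_sum fun k _ =>
    mul_le_mul_of_nonneg_left (ht.le_of_tendsto hlim k) (hw k)).trans (hsum n)

namespace ContinuousLinearMap

variable {H : Type*} [NormedAddCommGroup H] [InnerProductSpace ℝ H]

noncomputable def relaxedIter (T : H →L[ℝ] H) (lam : ℕ → ℝ) : ℕ → H →L[ℝ] H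
  | 0 => 1
  | n + 1 => (1 - lam n • T) * relaxedIter T lam n

variable (T : H →L[ℝ] H) (lam : ℕ → ℝ)

theorem relaxedIter_succ_apply (n : ℕ) (x : H) :
    relaxedIter T lam (n + 1) x = relaxedIter T lam n x - lam n • T (relaxedIter T lam n x) :=
  rfl

theorem relaxedIter_apply_apply (n : ℕ) (x : H) :
    relaxedIter T lam n (T x) = T (relaxedIter T lam n x) := by
  induction n with
  | zero => rfl
  | succ n ih => rw [relaxedIter_succ_apply, relaxedIter_succ_apply, ih, map_sub, map_smul]

theorem relaxedIter_apply_of_apply_eq_zero {x : H} (hx : T x = 0) (n : ℕ) :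
    relaxedIter T lam n x = x := by
  induction n with
  | zero => rfl
  | succ n ih => rw [relaxedIter_succ_apply, ih, hx, smul_zero, sub_zero]

variable {T lam}

theorem norm_apply_le_of_norm_sq_le_inner (hT : ∀ x, ‖T x‖ ^ 2 ≤ ⟪T x, x⟫) (x : H) :
    ‖T x‖ ≤ ‖x‖ := by
  have := (hT x).trans (real_inner_le_norm (T x) x)
  nlinarith [norm_nonneg (T x), norm_nonneg x]

theorem inner_apply_self_le_norm_sq (hT : ∀ x, ‖T x‖ ^ 2 ≤ ⟪T x, x⟫) (x : H) :
    ⟪T x, x⟫ ≤ ‖x‖ ^ 2 :=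
  calc ⟪T x, x⟫ ≤ ‖T x‖ * ‖x‖ := real_inner_le_norm _ _
    _ ≤ ‖x‖ * ‖x‖ := by gcongr; exact norm_apply_le_of_norm_sq_le_inner hT x
    _ = ‖x‖ ^ 2 := (sq _).symm

theorem norm_sub_smul_apply_sq_le (hT : ∀ x, ‖T x‖ ^ 2 ≤ ⟪T x, x⟫) (t : ℝ) (x : H) :
    ‖x - t • T x‖ ^ 2 ≤ ‖x‖ ^ 2 - t * (2 - t) * ⟪T x, x⟫ := by
  rw [norm_sub_sq_real, norm_smul, real_inner_smul_right, real_inner_comm, mul_pow,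
    Real.norm_eq_abs, sq_abs]
  nlinarith [mul_le_mul_of_nonneg_left (hT x) (sq_nonneg t)]

theorem norm_sub_smul_apply_le (hT : ∀ x, ‖T x‖ ^ 2 ≤ ⟪T x, x⟫) {t : ℝ}
    (ht : t ∈ Set.Icc (0 : ℝ) 2) (x : H) : ‖x - t • T x‖ ≤ ‖x‖ := by
  have := norm_sub_smul_apply_sq_le hT t x
  have : 0 ≤ t * (2 - t) * ⟪T x, x⟫ :=
    mul_nonneg (by nlinarith [ht.1, ht.2]) ((sq_nonneg _).trans (hT x))
  exact pow_le_pow_iff_left₀ (norm_nonneg _) (norm_nonneg _) two_ne_zero |>.1 (by linarith)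

theorem inner_apply_sub_smul_apply_le (hTsymm : (T : H →ₗ[ℝ] H).IsSymmetric)
    (hT : ∀ x, ‖T x‖ ^ 2 ≤ ⟪T x, x⟫) {t : ℝ} (ht : t ∈ Set.Icc (0 : ℝ) 2) (x : H) :
    ⟪T (x - t • T x), x - t • T x⟫ ≤ ⟪T x, x⟫ := by
  have hsymm : ⟪T (T x), x⟫ = ‖T x‖ ^ 2 :=
    (hTsymm (T x) x).trans (real_inner_self_eq_norm_sq _)
  have hle := inner_apply_self_le_norm_sq hT (T x)
  simp only [map_sub, map_smul, inner_sub_left, inner_sub_right, real_inner_smul_left,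
    real_inner_smul_right, real_inner_self_eq_norm_sq]
  rw [hsymm]
  nlinarith [mul_le_mul_of_nonneg_left hle (sq_nonneg t),
    mul_nonneg (mul_nonneg ht.1 (sub_nonneg.2 ht.2)) (sq_nonneg ‖T x‖)]

theorem norm_relaxedIter_apply_le (hT : ∀ x, ‖T x‖ ^ 2 ≤ ⟪T x, x⟫)
    (hlam : ∀ n, lam n ∈ Set.Icc (0 : ℝ) 2) (n : ℕ) (x : H) :
    ‖relaxedIter T lam n x‖ ≤ ‖x‖ := by
  induction n with
  | zero => rfl
  | succ n ih => exact (norm_sub_smul_apply_le hT (hlam n) _).trans ih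

theorem sum_mul_inner_relaxedIter_le (hT : ∀ x, ‖T x‖ ^ 2 ≤ ⟪T x, x⟫) (x : H) (n : ℕ) :
    ∑ k ∈ Finset.range n,
      lam k * (2 - lam k) * ⟪T (relaxedIter T lam k x), relaxedIter T lam k x⟫ ≤ ‖x‖ ^ 2 := by
  suffices ∀ n, ∑ k ∈ Finset.range n,
      lam k * (2 - lam k) * ⟪T (relaxedIter T lam k x), relaxedIter T lam k x⟫ +
        ‖relaxedIter T lam n x‖ ^ 2 ≤ ‖x‖ ^ 2 from
    le_trans (le_add_of_nonneg_right (sq_nonneg _)) (this n)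
  intro n
  induction n with
  | zero => simp only [Finset.sum_range_zero, zero_add]; exact le_rfl
  | succ n ih =>
    rw [Finset.sum_range_succ, relaxedIter_succ_apply]
    linarith [norm_sub_smul_apply_sq_le hT (lam n) (relaxedIter T lam n x)]

theorem tendsto_relaxedIter_apply_apply (hTsymm : (T : H →ₗ[ℝ] H).IsSymmetric)
    (hT : ∀ x, ‖T x‖ ^ 2 ≤ ⟪T x, x⟫) (hlam : ∀ n, lam n ∈ Set.Icc (0 : ℝ) 2)
    (hdiv : ¬ Summable fun n => lam n * (2 - lam n)) (x : H) :
    Tendsto (fun n => relaxedIter T lam n (T x)) atTop (𝓝 0) := by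
  set t := fun n => ⟪T (relaxedIter T lam n x), relaxedIter T lam n x⟫
  have hw (n : ℕ) : 0 ≤ lam n * (2 - lam n) := mul_nonneg (hlam n).1 (sub_nonneg.2 (hlam n).2)
  have hanti : Antitone t :=
    antitone_nat_of_succ_le fun n => inner_apply_sub_smul_apply_le hTsymm hT (hlam n) _
  have ht : Tendsto t atTop (𝓝 0) :=
    tendsto_zero_of_antitone_of_sum_mul_le hw hdiv hanti (fun n => (sq_nonneg _).trans (hT _))
      (sum_mul_inner_relaxedIter_le hT x)
  rw [tendsto_zero_iff_norm_tendsto_zero]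
  refine squeeze_zero (fun n => norm_nonneg _) (fun n => ?_) (by simpa using ht.sqrt)
  rw [relaxedIter_apply_apply]
  exact Real.le_sqrt_of_sq_le (hT _)

theorem tendsto_relaxedIter_apply_of_mem_orthogonal_ker [CompleteSpace H]
    (hTsymm : (T : H →ₗ[ℝ] H).IsSymmetric)
    (hT : ∀ x, ‖T x‖ ^ 2 ≤ ⟪T x, x⟫) (hlam : ∀ n, lam n ∈ Set.Icc (0 : ℝ) 2)
    (hdiv : ¬ Summable fun n => lam n * (2 - lam n)) {x : H} (hx : x ∈ T.kerᗮ) :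
    Tendsto (fun n => relaxedIter T lam n x) atTop (𝓝 0) := by
  have hlip (n : ℕ) : LipschitzWith 1 (relaxedIter T lam n) := by
    simpa using AddMonoidHomClass.lipschitz_of_bound (relaxedIter T lam n) 1
      fun y => by simpa using norm_relaxedIter_apply_le hT hlam n y
  have hclosed : IsClosed {y | Tendsto (fun n => relaxedIter T lam n y) atTop (𝓝 0)} :=
    (LipschitzWith.uniformEquicontinuous _ 1 hlip).equicontinuous.isClosed_setOfPred_tendsto
      continuous_const
  rw [← hTsymm.orthogonal_range, Submodule.orthogonal_orthogonal_eq_closure,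
    ← SetLike.mem_coe, Submodule.topologicalClosure_coe] at hx
  refine closure_minimal ?_ hclosed hx
  rintro _ ⟨y, rfl⟩
  exact tendsto_relaxedIter_apply_apply hTsymm hT hlam hdiv y

theorem tendsto_relaxedIter_apply [CompleteSpace H]
    (hTsymm : (T : H →ₗ[ℝ] H).IsSymmetric)
    (hT : ∀ x, ‖T x‖ ^ 2 ≤ ⟪T x, x⟫) (hlam : ∀ n, lam n ∈ Set.Icc (0 : ℝ) 2)
    (hdiv : ¬ Summable fun n => lam n * (2 - lam n)) (x : H) :
    Tendsto (fun n => relaxedIter T lam n x) atTop (𝓝 (T.ker.starProjection x)) := by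
  have hsplit (n : ℕ) : relaxedIter T lam n x =
      T.ker.starProjection x + relaxedIter T lam n (x - T.ker.starProjection x) := by
    rw [map_sub, relaxedIter_apply_of_apply_eq_zero T lam (T.ker.starProjection_apply_mem x),
      add_sub_cancel]
  simp_rw [hsplit]
  simpa using (tendsto_relaxedIter_apply_of_mem_orthogonal_ker hTsymm hT hlam hdiv
    (T.ker.sub_starProjection_mem_orthogonal x)).const_add (T.ker.starProjection x)

section Adjoint

variable {E F : Type*} [NormedAddCommGroup E] [InnerProductSpace ℝ E] [CompleteSpace E]
  [NormedAddCommGroup F] [InnerProductSpace ℝ F] [CompleteSpace F]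

theorem norm_adjoint_comp_self_apply_sq_le {S : E →L[ℝ] F} (hS : ‖S‖ ≤ 1) (x : E) :
    ‖(S† ∘L S) x‖ ^ 2 ≤ ⟪(S† ∘L S) x, x⟫ := by
  have hSx : ‖(S† ∘L S) x‖ ≤ ‖S x‖ :=
    calc ‖(S†) (S x)‖ ≤ ‖(S†)‖ * ‖S x‖ := le_opNorm _ _
      _ ≤ 1 * ‖S x‖ := by gcongr; rwa [LinearIsometryEquiv.norm_map]
      _ = ‖S x‖ := one_mul _
  calc ‖(S† ∘L S) x‖ ^ 2 ≤ ‖S x‖ ^ 2 := by gcongr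
    _ = ⟪(S† ∘L S) x, x⟫ := apply_norm_sq_eq_inner_adjoint_left S x

end Adjoint

end ContinuousLinearMap

namespace Submodule

variable {H : Type*} [NormedAddCommGroup H] [InnerProductSpace ℝ H]

theorem starProjection_eq_starProjection_inf_of_mem {A M K : Submodule ℝ H}
    [A.HasOrthogonalProjection] [K.HasOrthogonalProjection] [(A ⊓ M).HasOrthogonalProjection]
    (hK : ∀ y, y ∈ K ↔ A.starProjection y ∈ M) {x : H} (hx : x ∈ A) :
    K.starProjection x = (A ⊓ M).starProjection x := by
  set c := K.starProjection x
  have hxc : x - c ∈ Kᗮ := K.sub_starProjection_mem_orthogonal x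
  have hcK : c ∈ K := K.starProjection_apply_mem x
  have hAK : Aᗮ ≤ K := fun y hy => (hK y).2 <| by
    rw [(A.starProjection_apply_eq_zero_iff).2 hy]; exact M.zero_mem
  have hcA : c ∈ A := by
    have : x - c ∈ A := A.orthogonal_orthogonal ▸ orthogonal_le hAK hxc
    simpa using A.sub_mem hx this
  have hcM : c ∈ M := starProjection_eq_self_iff.2 hcA ▸ (hK c).1 hcK
  refine (eq_starProjection_of_mem_of_inner_eq_zero (mem_inf.2 ⟨hcA, hcM⟩) fun w hw => ?_).symm
  refine inner_left_of_mem_orthogonal ((hK w).2 ?_) hxc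
  rw [starProjection_eq_self_iff.2 hw.1]; exact hw.2

theorem norm_sub_lt_norm_sub_of_mem_orthogonal {K : Submodule ℝ H} {x y v : H}
    (hxy : x - y ∈ Kᗮ) (hvy : v - y ∈ K) (hne : v ≠ y) : ‖x - y‖ < ‖x - v‖ := by
  have h := norm_sub_sq_real (x - y) (v - y)
  rw [inner_left_of_mem_orthogonal hvy hxy, sub_sub_sub_cancel_right] at h
  have : 0 < ‖v - y‖ := norm_pos_iff.2 (sub_ne_zero.2 hne)
  exact lt_of_pow_lt_pow_left₀ 2 (norm_nonneg _) (by nlinarith)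

theorem eq_add_starProjection_of_forall_norm_sub_le (K : Submodule ℝ H)
    [K.HasOrthogonalProjection] {a x p : H} (hp : p - a ∈ K)
    (hmin : ∀ y, y - a ∈ K → ‖x - p‖ ≤ ‖x - y‖) : p = a + K.starProjection (x - a) := by
  by_contra hne
  refine (hmin _ (by simpa using K.starProjection_apply_mem (x - a))).not_gt
    (norm_sub_lt_norm_sub_of_mem_orthogonal (K := K) ?_ ?_ hne)
  · simpa [sub_add_eq_sub_sub] using K.sub_starProjection_mem_orthogonal (x - a)
  · simpa [sub_add_eq_sub_sub] using K.sub_mem hp (K.starProjection_apply_mem (x - a))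

theorem mem_orthogonal_span_range_iff {Z : Type*} (g : Z → H) (x : H) :
    x ∈ (span ℝ (Set.range g))ᗮ ↔ ∀ k, ⟪x, g k⟫ = 0 := by
  rw [← span_singleton_le_iff_mem, ← isOrtho_iff_le, isOrtho_span]
  simp

open ContinuousLinearMap in
theorem tendsto_relaxed_alternating_projections [CompleteSpace H] (A M : Submodule ℝ H)
    [A.HasOrthogonalProjection] [M.HasOrthogonalProjection] [(A ⊓ M).HasOrthogonalProjection]
    {lam : ℕ → ℝ} (hlam : ∀ n, lam n ∈ Set.Icc (0 : ℝ) 2)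
    (hdiv : ¬ Summable fun n => lam n * (2 - lam n)) {v : ℕ → H} (hv0 : v 0 ∈ A)
    (hv : ∀ n, v (n + 1) = A.starProjection (v n + lam n • (M.starProjection (v n) - v n))) :
    Tendsto v atTop (𝓝 ((A ⊓ M).starProjection (v 0))) := by
  set S := Mᗮ.starProjection ∘L A.starProjection
  have hS : ‖S‖ ≤ 1 := (opNorm_comp_le _ _).trans <|
    mul_le_one₀ (starProjection_norm_le _) (norm_nonneg _) (starProjection_norm_le _)
  set T := S† ∘L S
  have hTA {y : H} (hy : y ∈ A) : T y = A.starProjection (Mᗮ.starProjection y) := by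
    simp only [T, S, comp_apply, adjoint_comp, (isSelfAdjoint_starProjection _).adjoint_eq,
      starProjection_eq_self_iff.2 hy, starProjection_eq_self_iff.2 (starProjection_apply_mem _ _)]
  have hvA (n : ℕ) : v n ∈ A := by
    cases n with
    | zero => exact hv0
    | succ n => exact hv n ▸ A.starProjection_apply_mem _
  have hvT (n : ℕ) : v n = relaxedIter T lam n (v 0) := by
    induction n with
    | zero => rfl
    | succ n ih =>
      rw [relaxedIter_succ_apply, ← ih, hv n, hTA (hvA n), starProjection_orthogonal_val,
        map_add, map_smul, map_sub, map_sub, starProjection_eq_self_iff.2 (hvA n)]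
      module
  have hK (y : H) : y ∈ T.ker ↔ A.starProjection y ∈ M := by
    rw [ker_adjoint_comp_self, LinearMap.mem_ker, coe_coe, comp_apply,
      starProjection_apply_eq_zero_iff, orthogonal_orthogonal]
  rw [← starProjection_eq_starProjection_inf_of_mem hK hv0, funext hvT]
  exact tendsto_relaxedIter_apply ((isPositive_adjoint_comp_self S).isSelfAdjoint.isSymmetric)
    (norm_adjoint_comp_self_apply_sq_le hS) hlam hdiv (v 0)

end Submodule


theorem relaxed_POCS_converges_to_nearest_consistent_point_general
    {H : Type*} [NormedAddCommGroup H] [InnerProductSpace ℝ H] [CompleteSpace H]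
    {Z : Type*} (A : Submodule ℝ H) [CompleteSpace A]
    (g : Z → H)
    (s : Z → ℝ)
    (Hs : Set H) (hHs : Hs = {v : H | ∀ k : Z, ⟪v, g k⟫ = s k})
    (hAs : ∃ a, a ∈ A ∧ a ∈ Hs)
    (P : H → H) (hP : ∀ v : H, P v ∈ Hs ∧ ∀ y ∈ Hs, ‖v - P v‖ ≤ ‖v - y‖)
    (lam : ℕ → ℝ) (hlam : ∀ n, lam n ∈ Set.Icc (0:ℝ) 2)
    (hdiv : ¬ Summable (fun n => lam n * (2 - lam n)))
    (u : ℕ → H) (hu0 : u 0 ∈ A)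
    (hrec : ∀ n, u (n+1) =
      (Submodule.orthogonalProjectionOnto A (u n + lam n • (P (u n) - u n)) : H)) :
    ∃ y : H, (y ∈ A ∧ y ∈ Hs) ∧
      (∀ v : H, v ∈ A ∧ v ∈ Hs → v ≠ y → ‖u 0 - y‖ < ‖u 0 - v‖) ∧
      Filter.Tendsto u Filter.atTop (nhds y) := by
  obtain ⟨a, haA, haHs⟩ := hAs
  set M := (Submodule.span ℝ (Set.range g))ᗮ
  have hHsM (x : H) : x ∈ Hs ↔ x - a ∈ M := by
    subst hHs
    simp_all [M, Submodule.mem_orthogonal_span_range_iff, inner_sub_left, sub_eq_zero]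
  have hPa (x : H) : P x = a + M.starProjection (x - a) :=
    M.eq_add_starProjection_of_forall_norm_sub_le ((hHsM _).1 (hP x).1)
      fun y hy => (hP x).2 y ((hHsM y).2 hy)
  have : CompleteSpace (A ⊓ M : Submodule ℝ H) :=
    ((completeSpace_coe_iff_isComplete.1 ‹_›).isClosed.inter
      (Submodule.span ℝ (Set.range g)).isClosed_orthogonal).completeSpace_coe
  set c := (A ⊓ M).starProjection (u 0 - a)
  have hc : c ∈ A ⊓ M := (A ⊓ M).starProjection_apply_mem _
  have hlim : Tendsto (fun n => u n - a) atTop (𝓝 c) := by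
    refine A.tendsto_relaxed_alternating_projections M hlam hdiv (A.sub_mem hu0 haA) fun n => ?_
    rw [hrec, hPa, ← Submodule.starProjection_apply,
      show u n + lam n • (a + M.starProjection (u n - a) - u n) =
        (u n - a + lam n • (M.starProjection (u n - a) - (u n - a))) + a by module,
      map_add, Submodule.starProjection_eq_self_iff.2 haA, add_sub_cancel_right]
  refine ⟨a + c, ⟨A.add_mem haA hc.1, (hHsM _).2 (by simpa using hc.2)⟩,
    fun v ⟨hvA, hvHs⟩ hne => ?_, by simpa using hlim.const_add a⟩
  refine Submodule.norm_sub_lt_norm_sub_of_mem_orthogonal (K := A ⊓ M) ?_ ?_ hne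
  · rw [sub_add_eq_sub_sub]; exact (A ⊓ M).sub_starProjection_mem_orthogonal (u 0 - a)
  · rw [sub_add_eq_sub_sub]; exact (A ⊓ M).sub_mem ⟨A.sub_mem hvA haA, (hHsM v).1 hvHs⟩ hc

/-- Relaxed POCS iteration alternating the nearest-point projection
onto the closed affine consistency set `H_s` (for pairwise orthogonal nonzero
sampling kernels) and the orthogonal projection onto a closed subspace `A`,
with relaxation coefficients `λ_n ∈ [0,2]` satisfying `Σ λ_n (2 - λ_n) = ∞`,
converges in norm to the unique nearest point of `A_s = A ∩ H_s` to `u 0`. -/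
theorem relaxed_POCS_converges_to_nearest_consistent_point
    {H : Type*} [NormedAddCommGroup H] [InnerProductSpace ℝ H] [CompleteSpace H]
    {Z : Type*} (A : Submodule ℝ H) [CompleteSpace A]
    (g : Z → H) (hg : ∀ k j : Z, k ≠ j → ⟪g k, g j⟫ = 0) (hg0 : ∀ k : Z, g k ≠ 0)
    (s : Z → ℝ)
    (Hs : Set H) (hHs : Hs = {v : H | ∀ k : Z, ⟪v, g k⟫ = s k})
    (hAs : ∃ a, a ∈ A ∧ a ∈ Hs)
    (P : H → H) (hP : ∀ v : H, P v ∈ Hs ∧ ∀ y ∈ Hs, ‖v - P v‖ ≤ ‖v - y‖)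
    (lam : ℕ → ℝ) (hlam : ∀ n, lam n ∈ Set.Icc (0:ℝ) 2)
    (hdiv : ¬ Summable (fun n => lam n * (2 - lam n)))
    (u : ℕ → H) (hu0 : u 0 ∈ A)
    (hrec : ∀ n, u (n+1) =
      (Submodule.orthogonalProjectionOnto A (u n + lam n • (P (u n) - u n)) : H)) :
    ∃ y : H, (y ∈ A ∧ y ∈ Hs) ∧
      (∀ v : H, v ∈ A ∧ v ∈ Hs → v ≠ y → ‖u 0 - y‖ < ‖u 0 - v‖) ∧
      Filter.Tendsto u Filter.atTop (nhds y) :=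
  relaxed_POCS_converges_to_nearest_consistent_point_general A g s Hs hHs hAs P hP lam hlam hdiv u
    hu0 hrec
end

section
/- Let E and F be real Hilbert spaces, S : E → F a continuous linear map, S* its adjoint, N := (ker S)^⊥ assumed nonzero, B := sup{ ‖Su‖/‖u‖ : u ∈ N, u ≠ 0 } and γ := inf{ ‖Su‖/‖u‖ : u ∈ N, u ≠ 0 }. For s ∈ F and λ ∈ ℝ, define R u := u + λ S*(s − Su) and c_λ := max( |1 − λB²| , |1 − λγ²| ). Then for all v, w ∈ N, ‖R v − R w‖ ≤ c_λ ‖v − w‖. -/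
/-! Write `R v - R w = T (v - w)` with `T := 1 - λ S*S`. This `T` is self-adjoint and maps
`N = (ker S)ᗮ ⊇ ran S*` into itself, and on `N` its quadratic form `‖x‖² - λ‖S x‖²` lies between
`(1 - λB²)‖x‖²` and `(1 - λγ²)‖x‖²` because `γ‖x‖ ≤ ‖S x‖ ≤ B‖x‖` there. The norm of a
self-adjoint operator (here: `T` restricted to `N`) is the supremum of its Rayleigh quotients,
hence at most `c_λ`. -/

open scoped RealInnerProductSpace

section NormRatios

variable {E F : Type*} [NormedAddCommGroup E] [SeminormedAddCommGroup F]

def normRatios (f : E → F) (N : Set E) : Set ℝ := {r | ∃ u ∈ N, u ≠ 0 ∧ r = ‖f u‖ / ‖u‖}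

variable {f : E → F} {N : Set E}

theorem sInf_normRatios_nonneg : 0 ≤ sInf (normRatios f N) :=
  Real.sInf_nonneg (by rintro _ ⟨u, -, -, rfl⟩; positivity)

theorem sInf_normRatios_mul_le {x : E} (hx : x ∈ N) : sInf (normRatios f N) * ‖x‖ ≤ ‖f x‖ := by
  rcases eq_or_ne x 0 with rfl | hx0
  · simp
  · rw [← le_div_iff₀ (norm_pos_iff.mpr hx0)]
    exact csInf_le ⟨0, by rintro _ ⟨u, -, -, rfl⟩; positivity⟩ ⟨x, hx, hx0, rfl⟩

theorem norm_le_sSup_normRatios_mul {𝓕 : Type*} [FunLike 𝓕 E F] [ZeroHomClass 𝓕 E F] {f : 𝓕}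
    (hf : BddAbove (normRatios f N)) {x : E} (hx : x ∈ N) :
    ‖f x‖ ≤ sSup (normRatios f N) * ‖x‖ := by
  rcases eq_or_ne x 0 with rfl | hx0
  · simp
  · rw [← div_le_iff₀ (norm_pos_iff.mpr hx0)]
    exact le_csSup hf ⟨x, hx, hx0, rfl⟩

theorem ContinuousLinearMap.bddAbove_normRatios {𝕜 : Type*} [NontriviallyNormedField 𝕜]
    [NormedSpace 𝕜 E] [NormedSpace 𝕜 F] (S : E →L[𝕜] F) (N : Set E) :
    BddAbove (normRatios S N) := by
  refine ⟨‖S‖, ?_⟩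
  rintro _ ⟨u, -, hu0, rfl⟩
  exact div_le_of_le_mul₀ (norm_nonneg _) (norm_nonneg _) (S.le_opNorm u)

end NormRatios

theorem abs_sq_sub_mul_sq_le {a b γ B lam : ℝ} (ha : 0 ≤ a) (hγ : 0 ≤ γ) (hb : 0 ≤ b)
    (hlo : γ * a ≤ b) (hhi : b ≤ B * a) :
    |a ^ 2 - lam * b ^ 2| ≤ max |1 - lam * B ^ 2| |1 - lam * γ ^ 2| * a ^ 2 := by
  have hlo2 : (γ * a) ^ 2 ≤ b ^ 2 := pow_le_pow_left₀ (by positivity) hlo 2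
  have hhi2 : b ^ 2 ≤ (B * a) ^ 2 := pow_le_pow_left₀ hb hhi 2
  rw [max_mul_of_nonneg _ _ (sq_nonneg a), ← abs_of_nonneg (sq_nonneg a), ← abs_mul, ← abs_mul,
    abs_of_nonneg (sq_nonneg a)]
  rcases le_total 0 lam with hl | hl
  · exact abs_le_max_abs_abs (by nlinarith) (by nlinarith)
  · rw [max_comm]
    exact abs_le_max_abs_abs (by nlinarith) (by nlinarith)

theorem LinearMap.IsSymmetric.norm_apply_le_of_abs_re_inner_self_le {𝕜 E : Type*} [RCLike 𝕜]
    [NormedAddCommGroup E] [InnerProductSpace 𝕜 E] {T : E →L[𝕜] E}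
    (hT : (T : E →ₗ[𝕜] E).IsSymmetric) {N : Submodule 𝕜 E} (hN : ∀ x ∈ N, T x ∈ N) {c : ℝ}
    (hc : 0 ≤ c) (h : ∀ x ∈ N, |RCLike.re (inner 𝕜 (T x) x)| ≤ c * ‖x‖ ^ 2) {x : E}
    (hx : x ∈ N) :
    ‖T x‖ ≤ c * ‖x‖ := by
  have hTN : ‖T.restrict hN‖ ≤ c := by
    rw [(T.restrict hN).norm_eq_iSup_rayleighQuotient (hT.restrict_invariant hN)]
    refine ciSup_le fun y => ?_
    rw [ContinuousLinearMap.rayleighQuotient, abs_div, abs_sq]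
    exact div_le_of_le_mul₀ (sq_nonneg _) hc (h y y.2)
  exact (T.restrict hN).le_of_opNorm_le hTN ⟨x, hx⟩

theorem ContinuousLinearMap.adjoint_apply_mem_orthogonal_ker {𝕜 E F : Type*} [RCLike 𝕜]
    [NormedAddCommGroup E] [InnerProductSpace 𝕜 E] [CompleteSpace E]
    [NormedAddCommGroup F] [InnerProductSpace 𝕜 F] [CompleteSpace F] (S : E →L[𝕜] F) (y : F) :
    adjoint S y ∈ (LinearMap.ker (S : E →ₗ[𝕜] F))ᗮ := by
  rw [S.orthogonal_ker]
  exact Submodule.le_topologicalClosure _ ⟨y, rfl⟩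

section Landweber

variable {E F : Type*} [NormedAddCommGroup E] [InnerProductSpace ℝ E] [CompleteSpace E]
  [NormedAddCommGroup F] [InnerProductSpace ℝ F] [CompleteSpace F] (S : E →L[ℝ] F) (lam : ℝ)

open ContinuousLinearMap

theorem isSelfAdjoint_one_sub_smul_adjoint_comp_self :
    IsSelfAdjoint (1 - lam • (adjoint S ∘L S)) :=
  (IsSelfAdjoint.one _).sub
    ((IsSelfAdjoint.all lam).smul S.isPositive_adjoint_comp_self.isSelfAdjoint)

theorem inner_one_sub_smul_adjoint_comp_self_apply_self (x : E) :
    ⟪(1 - lam • (adjoint S ∘L S)) x, x⟫ = ‖x‖ ^ 2 - lam * ‖S x‖ ^ 2 := by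
  simp only [sub_apply, one_apply_eq_self, smul_apply, comp_apply, inner_sub_left,
    real_inner_smul_left, adjoint_inner_left, real_inner_self_eq_norm_sq]

noncomputable def frameIteration (s : F) (u : E) : E := u + lam • adjoint S (s - S u)

theorem frameIteration_sub_frameIteration (s : F) (v w : E) :
    frameIteration S lam s v - frameIteration S lam s w =
      (1 - lam • (adjoint S ∘L S)) (v - w) := by
  simp only [frameIteration, map_sub, sub_apply, one_apply_eq_self, smul_apply, comp_apply,
    smul_sub]
  abel

end Landweber

theorem frame_iteration_lipschitz_bound_general
    {E F : Type*} [NormedAddCommGroup E] [InnerProductSpace ℝ E] [CompleteSpace E]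
    [NormedAddCommGroup F] [InnerProductSpace ℝ F] [CompleteSpace F]
    (S : E →L[ℝ] F) (s : F) (lam : ℝ)
    (N : Submodule ℝ E) (hN : N = (LinearMap.ker (S : E →ₗ[ℝ] F))ᗮ)
    (B γ : ℝ)
    (hB : B = sSup {r : ℝ | ∃ u ∈ N, u ≠ 0 ∧ r = ‖S u‖ / ‖u‖})
    (hγ : γ = sInf {r : ℝ | ∃ u ∈ N, u ≠ 0 ∧ r = ‖S u‖ / ‖u‖}) :
    ∀ v ∈ N, ∀ w ∈ N,
      ‖(v + lam • (ContinuousLinearMap.adjoint S) (s - S v)) -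
          (w + lam • (ContinuousLinearMap.adjoint S) (s - S w))‖
        ≤ max |1 - lam * B ^ 2| |1 - lam * γ ^ 2| * ‖v - w‖ := by
  intro v hv w hw
  set T := 1 - lam • (ContinuousLinearMap.adjoint S ∘L S)
  have hTN : ∀ x ∈ N, T x ∈ N := fun x hx =>
    N.sub_mem hx (N.smul_mem lam (hN ▸ S.adjoint_apply_mem_orthogonal_ker (S x)))
  have hquad : ∀ x ∈ N,
      |RCLike.re ⟪T x, x⟫| ≤ max |1 - lam * B ^ 2| |1 - lam * γ ^ 2| * ‖x‖ ^ 2 := by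
    intro x hx
    rw [RCLike.re_to_real, inner_one_sub_smul_adjoint_comp_self_apply_self, hB, hγ]
    exact abs_sq_sub_mul_sq_le (norm_nonneg x) sInf_normRatios_nonneg (norm_nonneg (S x))
      (sInf_normRatios_mul_le hx) (norm_le_sSup_normRatios_mul (S.bddAbove_normRatios N) hx)
  change ‖frameIteration S lam s v - frameIteration S lam s w‖ ≤ _
  rw [frameIteration_sub_frameIteration]
  exact (isSelfAdjoint_one_sub_smul_adjoint_comp_self S lam).isSymmetric
    |>.norm_apply_le_of_abs_re_inner_self_le hTN (by positivity) hquad (N.sub_mem hv hw)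

/-- On `N := (ker S)ᗮ` (assumed nonzero), with
`B := sup ‖S u‖/‖u‖` and `γ := inf ‖S u‖/‖u‖` over nonzero `u ∈ N`, the map
`R u = u + λ S* (s - S u)` satisfies the Lipschitz bound
`‖R v - R w‖ ≤ max (|1 - λB²|) (|1 - λγ²|) ‖v - w‖` on `N`. -/
theorem frame_iteration_lipschitz_bound
    {E F : Type*} [NormedAddCommGroup E] [InnerProductSpace ℝ E] [CompleteSpace E]
    [NormedAddCommGroup F] [InnerProductSpace ℝ F] [CompleteSpace F]
    (S : E →L[ℝ] F) (s : F) (lam : ℝ)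
    (N : Submodule ℝ E) (hN : N = (LinearMap.ker (S : E →ₗ[ℝ] F))ᗮ) (hN0 : N ≠ ⊥)
    (B γ : ℝ)
    (hB : B = sSup {r : ℝ | ∃ u ∈ N, u ≠ 0 ∧ r = ‖S u‖ / ‖u‖})
    (hγ : γ = sInf {r : ℝ | ∃ u ∈ N, u ≠ 0 ∧ r = ‖S u‖ / ‖u‖}) :
    ∀ v ∈ N, ∀ w ∈ N,
      ‖(v + lam • (ContinuousLinearMap.adjoint S) (s - S v)) -
          (w + lam • (ContinuousLinearMap.adjoint S) (s - S w))‖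
        ≤ max |1 - lam * B ^ 2| |1 - lam * γ ^ 2| * ‖v - w‖ :=
  frame_iteration_lipschitz_bound_general S s lam N hN B γ hB hγ
end

section
/- Let H be a real Hilbert space, A a closed linear subspace with orthogonal projection P_A, and (g_k)_{k∈Z} a family of pairwise orthogonal nonzero vectors of H. Let S : A → ℓ²(Z) be defined by (Su)_k := ⟨u, g_k⟩/‖g_k‖ (so ‖S‖ ≤ 1), and suppose ran(S) is closed in ℓ²(Z); let S* be the adjoint of S, F := (ker S)^⊥ within A, and γ := inf{ ‖Su‖_{ℓ²}/‖u‖ : u ∈ F, u ≠ 0 } > 0. Let ε > 0, let (λ_n)_{n≥0} satisfy λ_n ∈ [ε, 2 − ε] for all n, let s ∈ ℓ²(Z), u⁽⁰⁾ ∈ A, and define u⁽ⁿ⁺¹⁾ := u⁽ⁿ⁾ + λ_n S*(s − S u⁽ⁿ⁾). Then (u⁽ⁿ⁾) converges in norm to u^∞ := w + Q u⁽⁰⁾, where w is the unique element of F with Sw = P_{ran(S)} s and Q is the orthogonal projection of A onto ker(S), and ‖u⁽ⁿ⁾ − u^∞‖ ≤ (1 − ε γ²)ⁿ ‖u⁽⁰⁾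 − u^∞‖ for all n ≥ 0. -/
open RealInnerProductSpace

/-!
On `F = (ker S)ᗮ`, which contains the range of `S*`, the operator `T = S*S` satisfies
`γ² ‖x‖² ≤ ⟪T x, x⟫ = ‖S x‖² ≤ ‖x‖²`. Since `S* s = S* S w`, the error `eₙ = u⁽ⁿ⁾ - u^∞` stays
in `F` and obeys `eₙ₊₁ = (I - λₙ T) eₙ`. For a symmetric `T` with `a ≤ T ≤ b` on an invariant
subspace, Cauchy–Schwarz for the nonnegative form of `T - a` gives
`‖T x‖² ≤ (a + b) ⟪T x, x⟫ - a b ‖x‖²`, hence `‖x - λ T x‖ ≤ max |1 - λ a| |1 - λ b| ‖x‖`;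
for `a = γ²`, `b = 1` and `λ ∈ [ε, 2 - ε]` this factor is at most `1 - ε γ²`.
-/

namespace LinearMap.IsSymmetric

variable {E : Type*} [NormedAddCommGroup E] [InnerProductSpace ℝ E]
  {T : E →ₗ[ℝ] E} {M : Submodule ℝ E}

theorem inner_apply_sq_le (hT : T.IsSymmetric) (hpos : ∀ z ∈ M, 0 ≤ ⟪T z, z⟫)
    {x y : E} (hx : x ∈ M) (hy : y ∈ M) : ⟪T x, y⟫ ^ 2 ≤ ⟪T x, x⟫ * ⟪T y, y⟫ := by
  let B : LinearMap.BilinForm ℝ M := (innerₗ E).compl₁₂ (T ∘ₗ M.subtype) M.subtype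
  have h := B.apply_mul_apply_le_of_forall_zero_le (fun z => hpos z z.2) ⟨x, hx⟩ ⟨y, hy⟩
  change ⟪T x, y⟫ * ⟪T y, x⟫ ≤ ⟪T x, x⟫ * ⟪T y, y⟫ at h
  rwa [hT y x, real_inner_comm (T x) y, ← sq] at h

theorem norm_apply_sq_le (hT : T.IsSymmetric) (hTM : ∀ x ∈ M, T x ∈ M) {a b : ℝ}
    (ha : ∀ x ∈ M, a * ‖x‖ ^ 2 ≤ ⟪T x, x⟫) (hb : ∀ x ∈ M, ⟪T x, x⟫ ≤ b * ‖x‖ ^ 2)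
    {x : E} (hx : x ∈ M) : ‖T x‖ ^ 2 ≤ (a + b) * ⟪T x, x⟫ - a * b * ‖x‖ ^ 2 := by
  set T' := T - a • LinearMap.id
  have hT' : T'.IsSymmetric := hT.sub (LinearMap.IsSymmetric.id.smul (by simp))
  have hT'_apply : ∀ y, T' y = T y - a • y := fun y => rfl
  have hinner' : ∀ y, ⟪T' y, y⟫ = ⟪T y, y⟫ - a * ‖y‖ ^ 2 := fun y => by
    rw [hT'_apply, inner_sub_left, real_inner_smul_left, real_inner_self_eq_norm_sq]
  have hf : T' x ∈ M := M.sub_mem (hTM x hx) (M.smul_mem a hx)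
  have hcs := hT'.inner_apply_sq_le (fun z hz => by rw [hinner']; linarith [ha z hz]) hx hf
  have hff : ⟪T' (T' x), T' x⟫ ≤ (b - a) * ‖T' x‖ ^ 2 := by rw [hinner']; linarith [hb _ hf]
  have hfx : ⟪T' x, x⟫ = ⟪T x, x⟫ - a * ‖x‖ ^ 2 := hinner' x
  have hTx : T x = T' x + a • x := by rw [hT'_apply, sub_add_cancel]
  generalize T' x = f at *
  -- Cauchy–Schwarz with `f = (T - a) x`: `‖f‖⁴ ≤ ⟪f, x⟫ ⟪(T - a) f, f⟫ ≤ ⟪f, x⟫ (b - a) ‖f‖²`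
  have hkey : ‖f‖ ^ 2 ≤ (b - a) * ⟪f, x⟫ := by
    rw [real_inner_self_eq_norm_sq] at hcs
    rcases eq_or_ne f 0 with rfl | hf0
    · simp
    · nlinarith [ha x hx, pow_pos (norm_pos_iff.mpr hf0) 2]
  rw [hTx, norm_add_sq_real, inner_add_left, real_inner_smul_right, real_inner_smul_left,
    norm_smul, Real.norm_eq_abs, mul_pow, sq_abs, real_inner_self_eq_norm_sq]
  nlinarith [hkey, hfx]

theorem norm_sub_smul_apply_le (hT : T.IsSymmetric) (hTM : ∀ x ∈ M, T x ∈ M) {a b : ℝ}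
    (ha : ∀ x ∈ M, a * ‖x‖ ^ 2 ≤ ⟪T x, x⟫) (hb : ∀ x ∈ M, ⟪T x, x⟫ ≤ b * ‖x‖ ^ 2)
    (l : ℝ) {x : E} (hx : x ∈ M) : ‖x - l • T x‖ ≤ max |1 - l * a| |1 - l * b| * ‖x‖ := by
  set c := max |1 - l * a| |1 - l * b|
  have hca : (1 - l * a) ^ 2 ≤ c ^ 2 := by
    rw [← sq_abs]; exact pow_le_pow_left₀ (abs_nonneg _) (le_max_left _ _) 2
  have hcb : (1 - l * b) ^ 2 ≤ c ^ 2 := by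
    rw [← sq_abs]; exact pow_le_pow_left₀ (abs_nonneg _) (le_max_right _ _) 2
  have hTx_sq := hT.norm_apply_sq_le hTM ha hb hx
  have hlow := ha x hx
  have hupp := hb x hx
  have hsq : ‖x - l • T x‖ ^ 2 ≤ (c * ‖x‖) ^ 2 := by
    rw [norm_sub_sq_real, real_inner_smul_right, norm_smul, Real.norm_eq_abs, mul_pow, sq_abs,
      real_inner_comm]
    -- the bound is affine in `⟪T x, x⟫`, so it is enough to check it at the ends of its range
    rcases le_total 0 (l ^ 2 * (a + b) - 2 * l) with hk | hk
    · nlinarith [mul_le_mul_of_nonneg_left hupp hk, mul_le_mul_of_nonneg_right hcb (sq_nonneg ‖x‖)]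
    · nlinarith [mul_le_mul_of_nonpos_left hlow hk, mul_le_mul_of_nonneg_right hca (sq_nonneg ‖x‖)]
  exact abs_le_of_sq_le_sq' hsq (by positivity) |>.2

end LinearMap.IsSymmetric

theorem max_abs_one_sub_mul_le {ε l a : ℝ} (hε : 0 ≤ ε) (hl : ε ≤ l ∧ l ≤ 2 - ε) (ha₀ : 0 ≤ a)
    (ha₁ : a ≤ 1) :
    max |1 - l * a| |1 - l| ≤ 1 - ε * a := by
  obtain ⟨hεl, hl2⟩ := hl
  refine max_le (abs_le.mpr ⟨?_, ?_⟩) (abs_le.mpr ⟨?_, ?_⟩) <;> nlinarith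

theorem orthonormal_inv_norm_smul {H ι : Type*} [NormedAddCommGroup H] [InnerProductSpace ℝ H]
    {g : ι → H} (hg : Pairwise fun i j => ⟪g i, g j⟫ = 0) (hg0 : ∀ i, g i ≠ 0) :
    Orthonormal ℝ fun i => ‖g i‖⁻¹ • g i := by
  refine ⟨fun i => ?_, fun i j hij => ?_⟩
  · rw [norm_smul, norm_inv, norm_norm, inv_mul_cancel₀ (norm_ne_zero_iff.mpr (hg0 i))]
  · dsimp only
    rw [real_inner_smul_left, real_inner_smul_right, hg hij, mul_zero, mul_zero]

theorem norm_le_of_apply_eq_inner_div_norm {H Z : Type*} [NormedAddCommGroup H]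
    [InnerProductSpace ℝ H] {g : Z → H} (hg : Pairwise fun i j => ⟪g i, g j⟫ = 0)
    (hg0 : ∀ k, g k ≠ 0) {v : H} {c : lp (fun _ : Z => ℝ) 2}
    (hc : ∀ k, c k = ⟪v, g k⟫ / ‖g k‖) : ‖c‖ ≤ ‖v‖ := by
  have hbessel := (orthonormal_inv_norm_smul hg hg0).tsum_inner_products_le v
  have hterm : ∀ k, ⟪c k, c k⟫ = ‖⟪‖g k‖⁻¹ • g k, v⟫‖ ^ 2 := fun k => by
    rw [real_inner_self_eq_norm_sq, hc, real_inner_smul_left, real_inner_comm, div_eq_inv_mul]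
  have hsq : ‖c‖ ^ 2 ≤ ‖v‖ ^ 2 := by
    rwa [← real_inner_self_eq_norm_sq, lp.inner_eq_tsum, tsum_congr hterm]
  exact abs_le_of_sq_le_sq' hsq (norm_nonneg v) |>.2

section InfRatio

variable {E F : Type*} [NormedAddCommGroup E] [NormedAddCommGroup F] {f : E → F} {M : Set E}

theorem bddBelow_norm_div_norm : BddBelow {r : ℝ | ∃ u ∈ M, u ≠ 0 ∧ r = ‖f u‖ / ‖u‖} :=
  ⟨0, by rintro r ⟨u, -, -, rfl⟩; positivity⟩

theorem sInf_norm_div_norm_mul_le {x : E} (hx : x ∈ M) :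
    sInf {r : ℝ | ∃ u ∈ M, u ≠ 0 ∧ r = ‖f u‖ / ‖u‖} * ‖x‖ ≤ ‖f x‖ := by
  rcases eq_or_ne x 0 with rfl | hx0
  · simp
  calc _ ≤ ‖f x‖ / ‖x‖ * ‖x‖ := mul_le_mul_of_nonneg_right
        (csInf_le bddBelow_norm_div_norm ⟨x, hx, hx0, rfl⟩) (norm_nonneg x)
    _ = ‖f x‖ := div_mul_cancel₀ _ (norm_ne_zero_iff.mpr hx0)

theorem sInf_norm_div_norm_le_one (hf : ∀ u ∈ M, ‖f u‖ ≤ ‖u‖) :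
    sInf {r : ℝ | ∃ u ∈ M, u ≠ 0 ∧ r = ‖f u‖ / ‖u‖} ≤ 1 := by
  rcases Set.eq_empty_or_nonempty {r : ℝ | ∃ u ∈ M, u ≠ 0 ∧ r = ‖f u‖ / ‖u‖} with h | ⟨r, hr⟩
  · rw [h, Real.sInf_empty]
    exact zero_le_one
  obtain ⟨u, hu, -, rfl⟩ := id hr
  exact csInf_le_of_le bddBelow_norm_div_norm hr (div_le_one_of_le₀ (hf u hu) (norm_nonneg u))

end InfRatio

theorem tendsto_of_norm_sub_le_geometric {X : Type*} [SeminormedAddCommGroup X] {x : ℕ → X}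
    {L : X} {q : ℝ} (hq₀ : 0 ≤ q) (hq₁ : q < 1) (h : ∀ n, ‖x n - L‖ ≤ q ^ n * ‖x 0 - L‖) :
    Filter.Tendsto x Filter.atTop (nhds L) := by
  refine tendsto_iff_norm_sub_tendsto_zero.mpr (squeeze_zero (fun n => norm_nonneg _) h ?_)
  simpa using (tendsto_pow_atTop_nhds_zero_of_lt_one hq₀ hq₁).mul_const ‖x 0 - L‖

namespace ContinuousLinearMap

section Adjoint

variable {𝕜 E F : Type*} [RCLike 𝕜] [NormedAddCommGroup E] [InnerProductSpace 𝕜 E]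
  [CompleteSpace E] [NormedAddCommGroup F] [InnerProductSpace 𝕜 F] [CompleteSpace F]
  (T : E →L[𝕜] F)

theorem adjoint_apply_mem_orthogonal_ker_s16 (y : F) :
    adjoint T y ∈ (LinearMap.ker (T : E →ₗ[𝕜] F))ᗮ := by
  rw [T.orthogonal_ker]
  exact Submodule.le_topologicalClosure _ ⟨y, rfl⟩

theorem adjoint_orthogonalProjectionOnto_range
    [(LinearMap.range (T : E →ₗ[𝕜] F)).HasOrthogonalProjection] (y : F) :
    adjoint T ((LinearMap.range (T : E →ₗ[𝕜] F)).orthogonalProjectionOnto y : F) = adjoint T y := by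
  have hy := (LinearMap.range (T : E →ₗ[𝕜] F)).sub_starProjection_mem_orthogonal y
  rw [T.orthogonal_range, LinearMap.mem_ker, coe_coe, map_sub, sub_eq_zero,
    Submodule.starProjection_apply] at hy
  exact hy.symm

end Adjoint

section Landweber

variable {E F : Type*} [NormedAddCommGroup E] [InnerProductSpace ℝ E] [CompleteSpace E]
  [NormedAddCommGroup F] [InnerProductSpace ℝ F] [CompleteSpace F] {S : E →L[ℝ] F} {γ ε : ℝ}

theorem norm_sub_smul_adjoint_comp_self_apply_le (hS : ∀ x, ‖S x‖ ≤ ‖x‖)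
    (hγ : ∀ x ∈ (LinearMap.ker (S : E →ₗ[ℝ] F))ᗮ, γ * ‖x‖ ≤ ‖S x‖) (hγ₀ : 0 ≤ γ) (hγ₁ : γ ≤ 1)
    (hε : 0 ≤ ε) {l : ℝ} (hl : ε ≤ l ∧ l ≤ 2 - ε) {x : E}
    (hx : x ∈ (LinearMap.ker (S : E →ₗ[ℝ] F))ᗮ) :
    ‖x - l • (adjoint S ∘L S) x‖ ≤ (1 - ε * γ ^ 2) * ‖x‖ := by
  have hinner (y : E) : ⟪(adjoint S ∘L S) y, y⟫ = ‖S y‖ ^ 2 := by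
    rw [comp_apply, adjoint_inner_left, real_inner_self_eq_norm_sq]
  have hlower : ∀ y ∈ (LinearMap.ker (S : E →ₗ[ℝ] F))ᗮ,
      γ ^ 2 * ‖y‖ ^ 2 ≤ ⟪(adjoint S ∘L S) y, y⟫ := fun y hy => by
    rw [hinner, ← mul_pow]
    exact pow_le_pow_left₀ (by positivity) (hγ y hy) 2
  have hupper : ∀ y ∈ (LinearMap.ker (S : E →ₗ[ℝ] F))ᗮ,
      ⟪(adjoint S ∘L S) y, y⟫ ≤ 1 * ‖y‖ ^ 2 := fun y _ => by
    rw [hinner, one_mul]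
    exact pow_le_pow_left₀ (norm_nonneg _) (hS y) 2
  calc _ ≤ max |1 - l * γ ^ 2| |1 - l * 1| * ‖x‖ :=
        S.isPositive_adjoint_comp_self.isSymmetric.norm_sub_smul_apply_le
          (fun y _ => S.adjoint_apply_mem_orthogonal_ker_s16 (S y)) hlower hupper l hx
    _ ≤ (1 - ε * γ ^ 2) * ‖x‖ := by
        rw [mul_one]
        gcongr
        exact max_abs_one_sub_mul_le hε hl (sq_nonneg γ) (pow_le_one₀ hγ₀ hγ₁)

theorem norm_landweber_sub_le (hS : ∀ x, ‖S x‖ ≤ ‖x‖)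
    (hγ : ∀ x ∈ (LinearMap.ker (S : E →ₗ[ℝ] F))ᗮ, γ * ‖x‖ ≤ ‖S x‖) (hγ₀ : 0 ≤ γ) (hγ₁ : γ ≤ 1)
    (hε : 0 ≤ ε) {lam : ℕ → ℝ} (hlam : ∀ n, ε ≤ lam n ∧ lam n ≤ 2 - ε) {s : F} {u : ℕ → E}
    (hrec : ∀ n, u (n + 1) = u n + lam n • adjoint S (s - S (u n))) {L : E}
    (hL : adjoint S s = adjoint S (S L)) (hL₀ : u 0 - L ∈ (LinearMap.ker (S : E →ₗ[ℝ] F))ᗮ)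
    (n : ℕ) : ‖u n - L‖ ≤ (1 - ε * γ ^ 2) ^ n * ‖u 0 - L‖ := by
  have herr (n : ℕ) : u (n + 1) - L = (u n - L) - lam n • (adjoint S ∘L S) (u n - L) := by
    rw [hrec, map_sub, hL, ← map_sub, comp_apply, map_sub S, ← neg_sub (S (u n)), map_neg]
    module
  have hmem (n : ℕ) : u n - L ∈ (LinearMap.ker (S : E →ₗ[ℝ] F))ᗮ := by
    induction n with
    | zero => exact hL₀
    | succ n ih =>
      exact herr n ▸ Submodule.sub_mem _ ih
        (Submodule.smul_mem _ _ (S.adjoint_apply_mem_orthogonal_ker_s16 _))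
  have hq₀ : 0 ≤ 1 - ε * γ ^ 2 := by nlinarith [(hlam 0).1, (hlam 0).2]
  refine le_geom (u := fun n => ‖u n - L‖) hq₀ n fun k _ => ?_
  exact herr k ▸ norm_sub_smul_adjoint_comp_self_apply_le hS hγ hγ₀ hγ₁ hε (hlam k) (hmem k)

end Landweber

end ContinuousLinearMap

theorem sampling_POCS_frame_algorithm_converges_general
    {H : Type*} [NormedAddCommGroup H] [InnerProductSpace ℝ H]
    {Z : Type*} (A : Submodule ℝ H) [CompleteSpace A]
    (g : Z → H) (hg : ∀ k j : Z, k ≠ j → ⟪g k, g j⟫ = 0) (hg0 : ∀ k : Z, g k ≠ 0)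
    (S : A →L[ℝ] lp (fun _ : Z => ℝ) 2)
    (hS : ∀ (u : A) (k : Z), (S u : ∀ _ : Z, ℝ) k = ⟪(u : H), g k⟫ / ‖g k‖)
    (Rn : Submodule ℝ (lp (fun _ : Z => ℝ) 2)) [CompleteSpace Rn]
    (hRn : Rn = LinearMap.range (S : A →ₗ[ℝ] lp (fun _ : Z => ℝ) 2))
    (K : Submodule ℝ A) [CompleteSpace K] (hK : K = LinearMap.ker (S : A →ₗ[ℝ] lp (fun _ : Z => ℝ) 2))
    (γ : ℝ) (hγ : γ = sInf {r : ℝ | ∃ u ∈ Kᗮ, u ≠ 0 ∧ r = ‖S u‖ / ‖u‖})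
    (hγpos : 0 < γ)
    (ε : ℝ) (hε : 0 < ε)
    (lam : ℕ → ℝ) (hlam : ∀ n, ε ≤ lam n ∧ lam n ≤ 2 - ε)
    (s : lp (fun _ : Z => ℝ) 2) (u : ℕ → A)
    (hrec : ∀ n, u (n+1) = u n + lam n • (ContinuousLinearMap.adjoint S) (s - S (u n)))
    (w : A) (hw : w ∈ Kᗮ)
    (hws : S w = (Submodule.orthogonalProjectionOnto Rn s : lp (fun _ : Z => ℝ) 2)) :
    Filter.Tendsto u Filter.atTop (nhds (w + (Submodule.orthogonalProjectionOnto K (u 0) : A))) ∧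
    ∀ n : ℕ, ‖u n - (w + (Submodule.orthogonalProjectionOnto K (u 0) : A))‖
        ≤ (1 - ε * γ ^ 2) ^ n * ‖u 0 - (w + (Submodule.orthogonalProjectionOnto K (u 0) : A))‖ := by
  subst hRn
  set L := w + (K.orthogonalProjectionOnto (u 0) : A)
  have hS_le (v : A) : ‖S v‖ ≤ ‖v‖ := norm_le_of_apply_eq_inner_div_norm hg hg0 (hS v)
  have hγ_le : ∀ x ∈ Kᗮ, γ * ‖x‖ ≤ ‖S x‖ := fun x hx => hγ ▸ sInf_norm_div_norm_mul_le hx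
  have hγ_one : γ ≤ 1 := hγ ▸ sInf_norm_div_norm_le_one fun v _ => hS_le v
  have hSL : ContinuousLinearMap.adjoint S s = ContinuousLinearMap.adjoint S (S L) := by
    have hQ : S (K.orthogonalProjectionOnto (u 0)) = 0 :=
      LinearMap.mem_ker.mp (hK.le (K.orthogonalProjectionOnto (u 0)).2)
    rw [← S.adjoint_orthogonalProjectionOnto_range, ← hws, map_add, hQ, add_zero]
  have hL₀ : u 0 - L ∈ Kᗮ := by
    have h := K.sub_starProjection_mem_orthogonal (u 0)
    rw [Submodule.starProjection_apply] at h
    simpa only [L, sub_add_eq_sub_sub_swap] using Kᗮ.sub_mem h hw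
  have hbound :=
    S.norm_landweber_sub_le hS_le (hK ▸ hγ_le) hγpos.le hγ_one hε.le hlam hrec hSL (hK ▸ hL₀)
  have hq₀ : 0 ≤ 1 - ε * γ ^ 2 := by nlinarith [(hlam 0).1, (hlam 0).2]
  have hq₁ : 1 - ε * γ ^ 2 < 1 := by nlinarith [mul_pos hε (pow_pos hγpos 2)]
  exact ⟨tendsto_of_norm_sub_le_geometric hq₀ hq₁ hbound, hbound⟩

/-- Frame-algorithm convergence for the sampling operator
`S : A → ℓ²(Z)`, `(S u) k = ⟨u, g k⟩/‖g k‖` with pairwise orthogonal nonzero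
kernels (so `‖S‖ ≤ 1`) and closed range. With `K := ker S`, `F := Kᗮ`,
`γ := inf ‖S u‖/‖u‖` over nonzero `u ∈ F` (positive), `λ_n ∈ [ε, 2 - ε]`, and
`u⁽ⁿ⁺¹⁾ = u⁽ⁿ⁾ + λ_n S*(s - S u⁽ⁿ⁾)`: if `w ∈ F` satisfies `S w = P_{ran S} s`,
then `u⁽ⁿ⁾ → u^∞ := w + Q u⁽⁰⁾` (Q the projection onto `ker S`) with
`‖u⁽ⁿ⁾ - u^∞‖ ≤ (1 - εγ²)ⁿ ‖u⁽⁰⁾ - u^∞‖`. -/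
theorem sampling_POCS_frame_algorithm_converges
    {H : Type*} [NormedAddCommGroup H] [InnerProductSpace ℝ H] [CompleteSpace H]
    {Z : Type*} (A : Submodule ℝ H) [CompleteSpace A]
    (g : Z → H) (hg : ∀ k j : Z, k ≠ j → ⟪g k, g j⟫ = 0) (hg0 : ∀ k : Z, g k ≠ 0)
    (S : A →L[ℝ] lp (fun _ : Z => ℝ) 2)
    (hS : ∀ (u : A) (k : Z), (S u : ∀ _ : Z, ℝ) k = ⟪(u : H), g k⟫ / ‖g k‖)
    (Rn : Submodule ℝ (lp (fun _ : Z => ℝ) 2)) [CompleteSpace Rn]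
    (hRn : Rn = LinearMap.range (S : A →ₗ[ℝ] lp (fun _ : Z => ℝ) 2))
    (K : Submodule ℝ A) [CompleteSpace K] (hK : K = LinearMap.ker (S : A →ₗ[ℝ] lp (fun _ : Z => ℝ) 2))
    (γ : ℝ) (hγ : γ = sInf {r : ℝ | ∃ u ∈ Kᗮ, u ≠ 0 ∧ r = ‖S u‖ / ‖u‖})
    (hγpos : 0 < γ)
    (ε : ℝ) (hε : 0 < ε)
    (lam : ℕ → ℝ) (hlam : ∀ n, ε ≤ lam n ∧ lam n ≤ 2 - ε)
    (s : lp (fun _ : Z => ℝ) 2) (u : ℕ → A)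
    (hrec : ∀ n, u (n+1) = u n + lam n • (ContinuousLinearMap.adjoint S) (s - S (u n)))
    (w : A) (hw : w ∈ Kᗮ)
    (hws : S w = (Submodule.orthogonalProjectionOnto Rn s : lp (fun _ : Z => ℝ) 2)) :
    Filter.Tendsto u Filter.atTop (nhds (w + (Submodule.orthogonalProjectionOnto K (u 0) : A))) ∧
    ∀ n : ℕ, ‖u n - (w + (Submodule.orthogonalProjectionOnto K (u 0) : A))‖
        ≤ (1 - ε * γ ^ 2) ^ n * ‖u 0 - (w + (Submodule.orthogonalProjectionOnto K (u 0) : A))‖ :=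
  sampling_POCS_frame_algorithm_converges_general A g hg hg0 S hS Rn hRn K hK γ hγ hγpos ε hε lam
    hlam s u hrec w hw hws
end

section
/- Let H be a real Hilbert space, A a closed linear subspace with orthogonal projection P_A, and C a nonempty affine subspace of H with complete direction and nearest-point projection P_C; assume A ∩ C ≠ ∅. Define R u := P_A( 2 P_C u − u ). Then for every u ∈ A: R u = u if and only if u ∈ A ∩ C; that is, the fixed points of R in A are exactly A ∩ C. -/
/-! Write `p = P_C u`. For `u ∈ A`, the equation `P_A (2p - u) = u` says exactly that `p - u ⊥ A`.
Since `p - u` is also orthogonal to the direction of `C`, for a common point `a ∈ A ∩ C` it is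
orthogonal to both `u - a ∈ A` and `p - a ∈ C.direction`, hence to their difference `p - u`:
so `p = u`, i.e. `u ∈ C`. -/

section

variable {𝕜 E : Type*} [RCLike 𝕜] [NormedAddCommGroup E] [InnerProductSpace 𝕜 E]

theorem eq_of_inner_sub_sub_eq_zero {x y a : E} (hx : inner 𝕜 (x - y) (x - a) = 0)
    (hy : inner 𝕜 (x - y) (y - a) = 0) : x = y := by
  rw [← sub_eq_zero, ← inner_self_eq_zero (𝕜 := 𝕜)]
  calc inner 𝕜 (x - y) (x - y) = inner 𝕜 (x - y) ((x - a) - (y - a)) := by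
        rw [sub_sub_sub_cancel_right]
    _ = 0 := by rw [inner_sub_right, hx, hy, sub_zero]

namespace Submodule

variable (K : Submodule 𝕜 E) [K.HasOrthogonalProjection] {u v : E}

theorem starProjection_eq_iff_sub_mem_orthogonal (hv : v ∈ K) :
    K.starProjection u = v ↔ u - v ∈ Kᗮ :=
  ⟨fun h => h ▸ K.sub_starProjection_mem_orthogonal u, K.eq_starProjection_of_mem_orthogonal hv⟩

theorem starProjection_two_smul_sub_eq_self_iff (hu : u ∈ K) (p : E) :
    K.starProjection ((2 : 𝕜) • p - u) = u ↔ p - u ∈ Kᗮ := by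
  have h : (2 : 𝕜) • p - u - u = (2 : 𝕜) • (p - u) := by module
  rw [K.starProjection_eq_iff_sub_mem_orthogonal hu, h, Kᗮ.smul_mem_iff two_ne_zero]

end Submodule

namespace EuclideanGeometry

theorem orthogonalProjection_sub_mem_orthogonal_iff_mem {K : Submodule 𝕜 E}
    (C : AffineSubspace 𝕜 E) [Nonempty C] [C.direction.HasOrthogonalProjection] {u a : E}
    (hu : u ∈ K) (haK : a ∈ K) (haC : a ∈ C) :
    (orthogonalProjection C u : E) - u ∈ Kᗮ ↔ u ∈ C := by
  set p : E := ↑(orthogonalProjection C u)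
  constructor
  · intro hpK
    have hpC : p - u ∈ C.directionᗮ := orthogonalProjection_vsub_mem_direction_orthogonal C u
    have hpa : p - a ∈ C.direction :=
      AffineSubspace.vsub_mem_direction (orthogonalProjection_mem u) haC
    have hp : p = u := eq_of_inner_sub_sub_eq_zero
      (C.direction.inner_left_of_mem_orthogonal hpa hpC)
      (K.inner_left_of_mem_orthogonal (K.sub_mem hu haK) hpK)
    exact hp ▸ orthogonalProjection_mem u
  · intro huC
    rw [show p = u from orthogonalProjection_eq_self_iff.mpr huC, sub_self]
    exact Kᗮ.zero_mem

end EuclideanGeometry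

end

theorem fixed_points_of_projected_reflection_general
    {H : Type*} [NormedAddCommGroup H] [InnerProductSpace ℝ H]
    (A : Submodule ℝ H) [CompleteSpace A]
    (C : AffineSubspace ℝ H) [Nonempty C] [CompleteSpace C.direction]
    (hAC : ∃ a, a ∈ A ∧ a ∈ C) :
    ∀ u ∈ A,
      ((A.orthogonalProjectionOnto
          ((2 : ℝ) • (EuclideanGeometry.orthogonalProjection C u : H) - u) : H) = u
        ↔ u ∈ A ∧ u ∈ C) := by
  obtain ⟨a, haA, haC⟩ := hAC
  intro u hu
  rw [and_iff_right hu,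
    ← EuclideanGeometry.orthogonalProjection_sub_mem_orthogonal_iff_mem C hu haA haC]
  exact A.starProjection_two_smul_sub_eq_self_iff hu _

/-- For a closed subspace `A` and a nonempty affine subspace `C`
with complete direction such that `A ∩ C ≠ ∅`, the fixed points in `A` of
`R u := P_A (2 P_C u - u)` (projection onto `A` composed with the reflection
across `C`) are exactly the points of `A ∩ C`. -/
theorem fixed_points_of_projected_reflection
    {H : Type*} [NormedAddCommGroup H] [InnerProductSpace ℝ H] [CompleteSpace H]
    (A : Submodule ℝ H) [CompleteSpace A]
    (C : AffineSubspace ℝ H) [Nonempty C] [CompleteSpace C.direction]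
    (hAC : ∃ a, a ∈ A ∧ a ∈ C) :
    ∀ u ∈ A,
      ((A.orthogonalProjectionOnto
          ((2 : ℝ) • (EuclideanGeometry.orthogonalProjection C u : H) - u) : H) = u
        ↔ u ∈ A ∧ u ∈ C) :=
  fixed_points_of_projected_reflection_general A C hAC
end
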